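/- Parallel duplicating steps can be completed to the complete development: if M ⇒_dup N then N ⇒_dup ⌊M⌋, where ⌊M⌋ is the complete development of M. -/
import Mathlib


variable {Loc Ch : Type}

/-- FMC terms: variable, push `[N]a.M`, pop `a<x>.M` (de Bruijn binder),
choice `i`, case `M ; i -> N`, and loop `M^i`. -/
inductive Tm (Loc Ch : Type) : Type where
  | var : ℕ → Tm Loc Ch
  | push : Tm Loc Ch → Loc → Tm Loc Ch → Tm Loc Ch
  | pop : Loc → Tm Loc Ch → Tm Loc Ch
  | choice : Ch → Tm Loc Ch
  | caseOf : Tm Loc Ch → Ch → Tm Loc Ch → Tm Loc Ch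
  | loop : Tm Loc Ch → Ch → Tm Loc Ch

namespace Tm

/-- Shift the free de Bruijn indices `≥ d` up by one. -/
def lift : Tm Loc Ch → ℕ → Tm Loc Ch
  | var n, d => if n < d then var n else var (n + 1)
  | push N a M, d => push (N.lift d) a (M.lift d)
  | pop a M, d => pop a (M.lift (d + 1))
  | choice i, _ => choice i
  | caseOf M i N, d => caseOf (M.lift d) i (N.lift d)
  | loop M i, d => loop (M.lift d) i

/-- Capture-avoiding substitution `{N/k}M` for the de Bruijn index `k`. -/
def subst : Tm Loc Ch → ℕ → Tm Loc Ch → Tm Loc Ch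
  | var n, k, N => if n = k then N else if n < k then var n else var (n - 1)
  | push P a M, k, N => push (P.subst k N) a (M.subst k N)
  | pop a M, k, N => pop a (M.subst (k + 1) (N.lift 0))
  | choice i, _, _ => choice i
  | caseOf M i P, k, N => caseOf (M.subst k N) i (P.subst k N)
  | loop M i, k, N => loop (M.subst k N) i

end Tm

/-- Parallel duplicating reduction `M ⇒_dup N`: `N` is the marked reduct of
`M` for some marking of beta- and unroll-redexes. -/
inductive Par : Tm Loc Ch → Tm Loc Ch → Prop where
  | var (n : ℕ) : Par (.var n) (.var n)
  | choice (i : Ch) : Par (.choice i) (.choice i)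
  | push (N N' : Tm Loc Ch) (a : Loc) (M M' : Tm Loc Ch) :
      Par N N' → Par M M' → Par (.push N a M) (.push N' a M')
  | pop (a : Loc) (M M' : Tm Loc Ch) :
      Par M M' → Par (.pop a M) (.pop a M')
  | caseOf (M M' : Tm Loc Ch) (i : Ch) (N N' : Tm Loc Ch) :
      Par M M' → Par N N' → Par (.caseOf M i N) (.caseOf M' i N')
  | loop (M M' : Tm Loc Ch) (i : Ch) :
      Par M M' → Par (.loop M i) (.loop M' i)
  | beta (N N' : Tm Loc Ch) (a : Loc) (M M' : Tm Loc Ch) :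
      Par N N' → Par M M' → Par (.push N a (.pop a M)) (M'.subst 0 N')
  | unroll (M M' : Tm Loc Ch) (i : Ch) :
      Par M M' → Par (.loop M i) (.caseOf M' i (.loop M' i))

namespace Tm

theorem lift_lift (M : Tm Loc Ch) : ∀ i j, i ≤ j →
    (M.lift i).lift (j+1) = (M.lift j).lift i := by
  induction M with
  | var n =>
    intro i j hij
    simp only [lift]
    split_ifs <;> simp only [lift] <;> split_ifs <;>
      first | rfl | omega | (exfalso; omega)
  | push N a M ihN ihM =>
    intro i j h
    simp [lift, ihN _ _ h, ihM _ _ h]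
  | pop a M ih =>
    intro i j h
    simp [lift, ih (i+1) (j+1) (by omega)]
  | choice i =>
    intros; rfl
  | caseOf M i N ihM ihN =>
    intro i j h
    simp [lift, ihM _ _ h, ihN _ _ h]
  | loop M i ih =>
    intro i j h
    simp [lift, ih _ _ h]

theorem lift_subst_cancel (M : Tm Loc Ch) : ∀ k N, (M.lift k).subst k N = M := by
  induction M with
  | var n =>
    intro k N
    simp only [lift]
    split_ifs <;> simp only [subst] <;> split_ifs <;>
      first | rfl | omega | (exfalso; omega) | (congr 1; omega)
  | push N a M ihN ihM =>
    intro k N'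
    simp [lift, subst, ihN, ihM]
  | pop a M ih =>
    intro k N
    simp [lift, subst, ih]
  | choice i =>
    intros; rfl
  | caseOf M i N ihM ihN =>
    intro k N'
    simp [lift, subst, ihM, ihN]
  | loop M i ih =>
    intro k N
    simp [lift, subst, ih]

theorem subst_lift_le (M : Tm Loc Ch) : ∀ d k (N : Tm Loc Ch), d ≤ k →
    (M.subst k N).lift d = (M.lift d).subst (k+1) (N.lift d) := by
  induction M with
  | var n =>
    intro d k N h
    simp only [subst, lift]
    split_ifs <;> simp only [subst, lift] <;> split_ifs <;>
      first | rfl | omega | (exfalso; omega) | (congr 1; omega)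
  | push N a M ihN ihM =>
    intro d k N' h
    simp [subst, lift, ihN _ _ _ h, ihM _ _ _ h]
  | pop a M ih =>
    intro d k N h
    simp only [subst, lift, ih (d+1) (k+1) _ (by omega)]
    rw [lift_lift N 0 d (by omega)]
  | choice i =>
    intros; rfl
  | caseOf M i N ihM ihN =>
    intro d k N' h
    simp [subst, lift, ihM _ _ _ h, ihN _ _ _ h]
  | loop M i ih =>
    intro d k N h
    simp [subst, lift, ih _ _ _ h]

theorem subst_lift_ge (M : Tm Loc Ch) : ∀ d k (N : Tm Loc Ch), k ≤ d →
    (M.subst k N).lift d = (M.lift (d+1)).subst k (N.lift d) := by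
  induction M with
  | var n =>
    intro d k N h
    simp only [subst, lift]
    split_ifs <;> simp only [subst, lift] <;> split_ifs <;>
      first | rfl | omega | (exfalso; omega) | (congr 1; omega)
  | push N a M ihN ihM =>
    intro d k N' h
    simp [subst, lift, ihN _ _ _ h, ihM _ _ _ h]
  | pop a M ih =>
    intro d k N h
    simp only [subst, lift, ih (d+1) (k+1) _ (by omega)]
    rw [lift_lift N 0 d (by omega)]
  | choice i =>
    intros; rfl
  | caseOf M i N ihM ihN =>
    intro d k N' h
    simp [subst, lift, ihM _ _ _ h, ihN _ _ _ h]
  | loop M i ih =>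
    intro d k N h
    simp [subst, lift, ih _ _ _ h]

theorem subst_subst (M : Tm Loc Ch) : ∀ j k (P N : Tm Loc Ch), j ≤ k →
    (M.subst j P).subst k N = (M.subst (k+1) (N.lift j)).subst j (P.subst k N) := by
  induction M with
  | var n =>
    intro j k P N h
    simp only [subst]
    split_ifs <;> (try simp only [subst]) <;> (try split_ifs) <;>
      first | rfl | omega | (exfalso; omega) | (rw [lift_subst_cancel]) | (congr 1; omega)
  | push Q a M ihQ ihM =>
    intro j k P N h
    simp [subst, ihQ _ _ _ _ h, ihM _ _ _ _ h]
  | pop a M ih =>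
    intro j k P N h
    simp only [subst, ih (j+1) (k+1) _ _ (by omega)]
    rw [lift_lift N 0 j (by omega), subst_lift_le P 0 k N (by omega)]
  | choice i =>
    intros; rfl
  | caseOf M i Q ihM ihQ =>
    intro j k P N h
    simp [subst, ihM _ _ _ _ h, ihQ _ _ _ _ h]
  | loop M i ih =>
    intro j k P N h
    simp [subst, ih _ _ _ _ h]

end Tm

theorem Par.lift {M M' : Tm Loc Ch} (h : Par M M') : ∀ d, Par (M.lift d) (M'.lift d) := by
  induction h with
  | var n =>
    intro d
    simp only [Tm.lift]
    split <;> exact Par.var _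
  | choice i =>
    intro d
    exact Par.choice i
  | push N N' a M M' _ _ ihN ihM =>
    intro d
    exact Par.push _ _ _ _ _ (ihN d) (ihM d)
  | pop a M M' _ ih =>
    intro d
    exact Par.pop _ _ _ (ih (d+1))
  | caseOf M M' i N N' _ _ ihM ihN =>
    intro d
    exact Par.caseOf _ _ _ _ _ (ihM d) (ihN d)
  | loop M M' i _ ih =>
    intro d
    exact Par.loop _ _ _ (ih d)
  | beta N N' a M M' _ _ ihN ihM =>
    intro d
    rw [Tm.subst_lift_ge M' d 0 N' (by omega)]
    exact Par.beta _ _ _ _ _ (ihN d) (ihM (d+1))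
  | unroll M M' i _ ih =>
    intro d
    exact Par.unroll _ _ _ (ih d)

theorem Par.subst {M M' : Tm Loc Ch} (h : Par M M') :
    ∀ k {N N' : Tm Loc Ch}, Par N N' → Par (M.subst k N) (M'.subst k N') := by
  induction h with
  | var n =>
    intro k N N' hN
    simp only [Tm.subst]
    split_ifs <;> first | exact hN | exact Par.var _
  | choice i =>
    intro k N N' hN
    exact Par.choice i
  | push P P' a M M' _ _ ihP ihM =>
    intro k N N' hN
    exact Par.push _ _ _ _ _ (ihP k hN) (ihM k hN)
  | pop a M M' _ ih =>
    intro k N N' hN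
    exact Par.pop _ _ _ (ih (k+1) (hN.lift 0))
  | caseOf M M' i P P' _ _ ihM ihP =>
    intro k N N' hN
    exact Par.caseOf _ _ _ _ _ (ihM k hN) (ihP k hN)
  | loop M M' i _ ih =>
    intro k N N' hN
    exact Par.loop _ _ _ (ih k hN)
  | beta P P' a M M' _ _ ihP ihM =>
    intro k N N' hN
    rw [Tm.subst_subst M' 0 k P' N' (by omega)]
    exact Par.beta _ _ _ _ _ (ihP k hN) (ihM (k+1) (hN.lift 0))
  | unroll M M' i _ ih =>
    intro k N N' hN
    exact Par.unroll _ _ _ (ih k hN)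

variable [DecidableEq Loc]

/-- The complete development `⌊M⌋`: the marked reduct of the marking of
every beta- and unroll-redex of `M`. -/
def cd [DecidableEq Loc] : Tm Loc Ch → Tm Loc Ch
  | .var n => .var n
  | .choice i => .choice i
  | .pop a M => .pop a (cd M)
  | .caseOf M i N => .caseOf (cd M) i (cd N)
  | .loop M i => .caseOf (cd M) i (.loop (cd M) i)
  | .push N a (.pop b M) =>
      if a = b then (cd M).subst 0 (cd N) else .push (cd N) a (.pop b (cd M))
  | .push N a M => .push (cd N) a (cd M)

/-- A parallel duplicating step can be completed to the complete development. -/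
theorem par_complete_development (M N : Tm Loc Ch) (h : Par M N) : Par N (cd M) := by
  induction h with
  | var n => exact Par.var n
  | choice i => exact Par.choice i
  | push N N' a M M' hN hM ihN ihM =>
    cases M with
    | pop b M0 =>
      cases hM with
      | pop _ _ M0' hM0 =>
        have ih0 : Par M0' (cd M0) := by
          rw [show cd (Tm.pop b M0) = Tm.pop b (cd M0) from rfl] at ihM
          cases ihM with | pop _ _ _ h => exact h
        by_cases hab : a = b
        · subst hab
          rw [show cd (Tm.push N a (Tm.pop a M0)) = (cd M0).subst 0 (cd N) from by
            simp [cd]]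
          exact Par.beta _ _ _ _ _ ihN ih0
        · rw [show cd (Tm.push N a (Tm.pop b M0))
              = Tm.push (cd N) a (Tm.pop b (cd M0)) from by simp [cd, hab]]
          exact Par.push _ _ _ _ _ ihN (Par.pop _ _ _ ih0)
    | var n => exact Par.push _ _ _ _ _ ihN ihM
    | choice i => exact Par.push _ _ _ _ _ ihN ihM
    | push P b Q => exact Par.push _ _ _ _ _ ihN ihM
    | caseOf P i Q => exact Par.push _ _ _ _ _ ihN ihM
    | loop P i => exact Par.push _ _ _ _ _ ihN ihM
  | pop a M M' hM ih => exact Par.pop _ _ _ ih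
  | caseOf M M' i N N' hM hN ihM ihN => exact Par.caseOf _ _ _ _ _ ihM ihN
  | loop M M' i hM ih => exact Par.unroll _ _ _ ih
  | beta N N' a M M' hN hM ihN ihM =>
    rw [show cd (Tm.push N a (Tm.pop a M)) = (cd M).subst 0 (cd N) from by simp [cd]]
    exact ihM.subst 0 ihN
  | unroll M M' i hM ih =>
    exact Par.caseOf _ _ _ _ _ ih (Par.loop _ _ _ ih)
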